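/- arXiv:2502.00892 — 3 statements merged into one kernel-verified Lean document; each statement's English description precedes it below -/
import Mathlib

section
/- Let (Pnt, 𝒪) be a semitopology and n ∈ ℕ with n ≥ 1. Then the following are equivalent: (1) (Pnt, 𝒪) is n-twined; (2) for all subsets P₁,…,P_{n−1} ⊆ Pnt, if each Pᵢ has a nonempty open interior then the intersection P₁ ∩ … ∩ P_{n−1} is dense (where the intersection of the empty collection is Pnt). -/
/-- A semitopology: a set of points together with a collection of open sets closed under
arbitrary unions (in particular the empty set is open) and containing the whole point set. -/
structure Semitopology (Pnt : Type*) where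
  opens : Set (Set Pnt)
  sUnion_mem : ∀ C ⊆ opens, ⋃₀ C ∈ opens
  univ_mem : Set.univ ∈ opens

/-- A subset `P` is dense (w.r.t. a collection `opens` of open sets) when every nonempty
open set intersects `P`. -/
def IsDense {Pnt : Type*} (opens : Set (Set Pnt)) (P : Set Pnt) : Prop :=
  ∀ O ∈ opens, O ≠ ∅ → (O ∩ P).Nonempty

/-- A subset `P` has a nonempty open interior when some nonempty open set is contained in `P`. -/
def Noi {Pnt : Type*} (opens : Set (Set Pnt)) (P : Set Pnt) : Prop :=
  ∃ O ∈ opens, O ≠ ∅ ∧ O ⊆ P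

/-- A collection of open sets is n-twined when any n nonempty open sets have
nonempty intersection. -/
def Twined {Pnt : Type*} (opens : Set (Set Pnt)) (n : ℕ) : Prop :=
  ∀ Os : Fin n → Set Pnt, (∀ i, Os i ∈ opens ∧ Os i ≠ ∅) → (⋂ i, Os i).Nonempty

/-- The open sets of the semitopology AllBut(N,f) on points {0,…,N−1}: the empty set
together with all subsets of cardinality at least N − f. -/
def allButOpens (N f : ℕ) : Set (Set (Fin N)) :=
  {O | O = ∅ ∨ N - f ≤ O.ncard}

/-- for n ≥ 1, a semitopology is n-twined iff for all subsets P₁,…,P_{n−1},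
if each has a nonempty open interior then their intersection is dense
(the empty intersection being the whole space). -/
theorem stmt14 {Pnt : Type*} (S : Semitopology Pnt) (n : ℕ) (hn : 1 ≤ n) :
    Twined S.opens n ↔
      ∀ Ps : Fin (n - 1) → Set Pnt, (∀ i, Noi S.opens (Ps i)) →
        IsDense S.opens (⋂ i, Ps i) := by
  obtain ⟨m, rfl⟩ : ∃ m, n = m + 1 := ⟨n - 1, (Nat.succ_pred_eq_of_pos hn).symm⟩
  constructor
  · intro htw Ps hnoi O hO hOne
    choose Qs hQs hQne hQsub using hnoi
    have h := htw (Fin.cons O Qs) ?_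
    · obtain ⟨x, hx⟩ := h
      refine ⟨x, ?_, ?_⟩
      · simpa using Set.mem_iInter.1 hx 0
      · exact Set.mem_iInter.2 fun i => hQsub i (by simpa using Set.mem_iInter.1 hx i.succ)
    · intro i
      refine Fin.cases ?_ ?_ i
      · exact ⟨hO, hOne⟩
      · intro j; exact ⟨by simpa using hQs j, by simpa using hQne j⟩
  · intro h Os hOs
    have hd := h (fun i => Os i.succ) (fun i => ⟨Os i.succ, (hOs i.succ).1, (hOs i.succ).2, subset_rfl⟩)
    obtain ⟨x, hx0, hx⟩ := hd (Os 0) (hOs 0).1 (hOs 0).2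
    refine ⟨x, Set.mem_iInter.2 fun i => ?_⟩
    refine Fin.cases hx0 (fun j => Set.mem_iInter.1 hx j) i
end

section
/- Let N, f ∈ ℕ with f < N and let n ∈ ℕ with n ≥ 1. Then N > n·f if and only if the semitopology AllBut(N,f) is n-twined. -/
/-! `AllBut(N,f)` is `n`-twined iff `N > n·f`: a nonempty open set misses at most `f` points,
so `n` of them can have empty intersection exactly when `n` sets of at most `f` points each can
cover all `N` points. -/

open Set

lemma ncard_compl_le_of_mem_allButOpens {N f : ℕ} {O : Set (Fin N)}
    (hO : O ∈ allButOpens N f) (hne : O ≠ ∅) : Oᶜ.ncard ≤ f := by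
  have hsum : O.ncard + Oᶜ.ncard = N := by rw [ncard_add_ncard_compl]; simp
  rcases hO with h | h
  · exact absurd h hne
  · omega

lemma mem_allButOpens_of_ncard_compl_le {N f : ℕ} {O : Set (Fin N)} (h : Oᶜ.ncard ≤ f) :
    O ∈ allButOpens N f := by
  have hsum : O.ncard + Oᶜ.ncard = N := by rw [ncard_add_ncard_compl]; simp
  exact Or.inr (by omega)

lemma ncard_fin_val_preimage_Ico_le (N a b : ℕ) :
    (Fin.val ⁻¹' Ico a b : Set (Fin N)).ncard ≤ b - a :=
  (ncard_le_ncard_of_injOn Fin.val (fun _ hx ↦ hx) Fin.val_injective.injOn (finite_Ico a b)).trans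
    (ncard_Ico_nat a b).le

-- The covering sets are the blocks `[i·f, i·f + f)` of consecutive points.
lemma exists_iUnion_eq_univ_ncard_le {N f n : ℕ} (h : N ≤ n * f) :
    ∃ S : Fin n → Set (Fin N), (∀ i, (S i).ncard ≤ f) ∧ ⋃ i, S i = univ := by
  refine ⟨fun i ↦ Fin.val ⁻¹' Ico (i * f) (i * f + f), fun i ↦ ?_, ?_⟩
  · simpa using ncard_fin_val_preimage_Ico_le N (i * f) (i * f + f)
  · refine eq_univ_of_forall fun x ↦ mem_iUnion.2 ?_
    have hx : x.val < n * f := x.isLt.trans_le h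
    have hf : 0 < f := Nat.pos_of_mul_pos_left (x.val.zero_le.trans_lt hx)
    refine ⟨⟨x.val / f, Nat.div_lt_of_lt_mul (by rwa [mul_comm] at hx)⟩, ?_, ?_⟩
    · exact Nat.div_mul_le_self x.val f
    · exact Nat.lt_div_mul_add hf

lemma twined_allButOpens_of_mul_lt {N f n : ℕ} (h : n * f < N) :
    Twined (allButOpens N f) n := by
  intro Os hOs
  by_contra hempty
  have hcover : ⋃ i, (Os i)ᶜ = univ := by
    rw [← compl_iInter, not_nonempty_iff_eq_empty.1 hempty, compl_empty]
  have : N ≤ n * f :=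
    calc N = (⋃ i, (Os i)ᶜ).ncard := by simp [hcover]
      _ ≤ ∑ i, ((Os i)ᶜ).ncard := ncard_iUnion_le_of_fintype _
      _ ≤ ∑ _i : Fin n, f :=
        Finset.sum_le_sum fun i _ ↦ ncard_compl_le_of_mem_allButOpens (hOs i).1 (hOs i).2
      _ = n * f := by simp
  omega

lemma mul_lt_of_twined_allButOpens {N f n : ℕ} (hf : f < N) (h : Twined (allButOpens N f) n) :
    n * f < N := by
  by_contra! hle
  obtain ⟨S, hS, hcover⟩ := exists_iUnion_eq_univ_ncard_le hle
  have hopen : ∀ i, (S i)ᶜ ∈ allButOpens N f ∧ (S i)ᶜ ≠ ∅ := fun i ↦ by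
    refine ⟨mem_allButOpens_of_ncard_compl_le (by simpa using hS i), fun h0 ↦ ?_⟩
    have := hS i
    rw [compl_empty_iff.1 h0, ncard_univ, Nat.card_eq_fintype_card, Fintype.card_fin] at this
    omega
  have := h _ hopen
  rw [← compl_iUnion, hcover, compl_univ] at this
  exact not_nonempty_empty this

theorem stmt15_general (N f n : ℕ) (hf : f < N) :
    N > n * f ↔ Twined (allButOpens N f) n :=
  ⟨twined_allButOpens_of_mul_lt, mul_lt_of_twined_allButOpens hf⟩

/-- for f < N and n ≥ 1, N > n·f iff AllBut(N,f) is n-twined. -/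
theorem stmt15 (N f n : ℕ) (hf : f < N) (hn : 1 ≤ n) :
    N > n * f ↔ Twined (allButOpens N f) n :=
  stmt15_general N f n hf
end

section
/- If a semitopology (Pnt, 𝒪) is 2-twined, then any two-element partition of Pnt contains a dense element: for all P₁, P₂ ⊆ Pnt with P₁ ∪ P₂ = Pnt and P₁ ∩ P₂ = ∅, either P₁ is dense or P₂ is dense. -/
/-- in a 2-twined semitopology, any two-element partition of the point set
contains a dense element. -/
theorem stmt18 {Pnt : Type*} (S : Semitopology Pnt) (h : Twined S.opens 2)
    (P₁ P₂ : Set Pnt) (hunion : P₁ ∪ P₂ = Set.univ) (hdisj : P₁ ∩ P₂ = ∅) :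
    IsDense S.opens P₁ ∨ IsDense S.opens P₂ := by
  by_cases h1 : IsDense S.opens P₁
  · exact Or.inl h1
  right
  simp only [IsDense, not_forall] at h1
  obtain ⟨O, hO, hOne, hOemp⟩ := h1
  have hOP2 : O ⊆ P₂ := by
    intro x hx
    have hxu : x ∈ P₁ ∪ P₂ := hunion ▸ Set.mem_univ x
    rcases hxu with h' | h'
    · exact absurd ⟨x, hx, h'⟩ hOemp
    · exact h'
  intro O' hO' hO'ne
  have := h (fun i => if i = 0 then O' else O) (by
    intro i
    by_cases hi : i = 0 <;> simp [hi, hO, hOne, hO', hO'ne])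
  obtain ⟨x, hx⟩ := this
  have hx0 := Set.mem_iInter.mp hx 0
  have hx1 := Set.mem_iInter.mp hx 1
  simp at hx0 hx1
  exact ⟨x, hx0, hOP2 hx1⟩
end
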